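/- arXiv:2501.16455 — 3 statements merged into one kernel-verified Lean document; each statement's English description precedes it below -/
import Mathlib

section
/- Let (F, G) : [0, T) → ℝ² be a C¹ solution of the system Ġ = cF − dFG, Ḟ = −F² − m − kG (with constants c, d, k, m, d ≠ 0), and let r : [0,T) → ℝ satisfy ṙ = F r with r(0) > 0. Then the quantity (c − dG(t)) · r(t)^d is constant in t. In particular, the sign of c − dG(t) equals the sign of c − dG(0) for all t ∈ [0, T). -/
/-!
Write `g = c - dG`. The system gives `ġ = -dFg`, while `(r^d)˙ = dF r^d`, so the product
`g r^d` has zero derivative as long as `r > 0`. Positivity of `r` comes from the integrating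
factor: `r(t) = r(0) exp (∫₀ᵗ F)`. Since `r^d > 0`, the conserved product forces `g(t)` to keep
the sign of `g(0)`.
-/

open Set

theorem Real.sign_mul_of_pos {a p : ℝ} (hp : 0 < p) : Real.sign (a * p) = Real.sign a := by
  rcases lt_trichotomy a 0 with ha | rfl | ha
  · rw [Real.sign_of_neg ha, Real.sign_of_neg (mul_neg_of_neg_of_pos ha hp)]
  · rw [zero_mul]
  · rw [Real.sign_of_pos ha, Real.sign_of_pos (mul_pos ha hp)]

theorem Convex.eq_of_hasDerivWithinAt_eq_zero {E : Type*} [NormedAddCommGroup E]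
    [NormedSpace ℝ E] {f : ℝ → E} {s : Set ℝ} (hs : Convex ℝ s)
    (hf : ∀ x ∈ s, HasDerivWithinAt f 0 s x) {x y : ℝ} (hx : x ∈ s) (hy : y ∈ s) :
    f y = f x := by
  have h := hs.norm_image_sub_le_of_norm_hasDerivWithin_le hf (C := 0)
    (fun _ _ => norm_zero.le) hx hy
  rwa [zero_mul, norm_le_zero_iff, sub_eq_zero] at h

theorem ContinuousOn.hasDerivWithinAt_integral_Icc {f : ℝ → ℝ} {a b x : ℝ}
    (hf : ContinuousOn f (Icc a b)) (hx : x ∈ Icc a b) :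
    HasDerivWithinAt (fun u => ∫ y in a..u, f y) (f x) (Icc a b) x := by
  have : Fact (x ∈ Icc a b) := ⟨hx⟩
  exact intervalIntegral.integral_hasDerivWithinAt_right
    ((hf.mono (uIcc_subset_Icc (left_mem_Icc.2 (hx.1.trans hx.2)) hx)).intervalIntegrable)
    (hf.stronglyMeasurableAtFilter_nhdsWithin measurableSet_Icc x) (hf x hx)

theorem eq_mul_exp_integral_of_hasDerivWithinAt {f r : ℝ → ℝ} {a b : ℝ}
    (hf : ContinuousOn f (Icc a b))
    (hr : ∀ x ∈ Icc a b, HasDerivWithinAt r (f x * r x) (Icc a b) x) {x : ℝ}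
    (hx : x ∈ Icc a b) : r x = r a * Real.exp (∫ y in a..x, f y) := by
  have hE : ∀ y ∈ Icc a b,
      HasDerivWithinAt (fun u => r u * Real.exp (-∫ z in a..u, f z)) 0 (Icc a b) y := by
    intro y hy
    refine ((hr y hy).mul (hf.hasDerivWithinAt_integral_Icc hy).neg.exp).congr_deriv ?_
    ring
  have hconst := (convex_Icc a b).eq_of_hasDerivWithinAt_eq_zero hE
    (left_mem_Icc.2 (hx.1.trans hx.2)) hx
  simp only [intervalIntegral.integral_same, neg_zero, Real.exp_zero, mul_one] at hconst
  rw [← hconst, mul_assoc, ← Real.exp_add, neg_add_cancel, Real.exp_zero, mul_one]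

theorem hasDerivAt_mul_rpow_eq_zero {g r : ℝ → ℝ} {f d x : ℝ}
    (hg : HasDerivAt g (-(d * f * g x)) x) (hr : HasDerivAt r (f * r x) x) (hx : 0 < r x) :
    HasDerivAt (fun y => g y * r y ^ d) 0 x := by
  have hrpow : r x * r x ^ (d - 1) = r x ^ d := by
    rw [Real.rpow_sub hx, Real.rpow_one, mul_div_cancel₀ _ hx.ne']
  refine (hg.mul (hr.rpow_const (Or.inl hx.ne'))).congr_deriv ?_
  linear_combination (g x * f * d) * hrpow

theorem conserved_background_general (c d k m T : ℝ)
    (F G r : ℝ → ℝ)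
    (hG : ∀ t ∈ Set.Ico (0:ℝ) T, HasDerivAt G (c * F t - d * F t * G t) t)
    (hF : ∀ t ∈ Set.Ico (0:ℝ) T, HasDerivAt F (-(F t) ^ 2 - m - k * G t) t)
    (hr : ∀ t ∈ Set.Ico (0:ℝ) T, HasDerivAt r (F t * r t) t)
    (hr0 : 0 < r 0) :
    ∀ t ∈ Set.Ico (0:ℝ) T,
      (c - d * G t) * r t ^ d = (c - d * G 0) * r 0 ^ d ∧
      Real.sign (c - d * G t) = Real.sign (c - d * G 0) := by
  intro t ht
  have hsub : Icc 0 t ⊆ Ico 0 T := Icc_subset_Ico_right ht.2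
  have hpos : ∀ s ∈ Icc 0 t, 0 < r s := fun s hs => by
    rw [eq_mul_exp_integral_of_hasDerivWithinAt
      (fun u hu => (hF u (hsub hu)).continuousAt.continuousWithinAt)
      (fun u hu => (hr u (hsub hu)).hasDerivWithinAt) hs]
    positivity
  have hderiv : ∀ s ∈ Icc 0 t,
      HasDerivWithinAt (fun u => (c - d * G u) * r u ^ d) 0 (Icc 0 t) s := by
    intro s hs
    refine (hasDerivAt_mul_rpow_eq_zero ?_ (hr s (hsub hs)) (hpos s hs)).hasDerivWithinAt
    exact ((hG s (hsub hs)).const_mul d).const_sub c |>.congr_deriv (by ring)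
  have hconst := (convex_Icc 0 t).eq_of_hasDerivWithinAt_eq_zero hderiv
    (left_mem_Icc.2 ht.1) (right_mem_Icc.2 ht.1)
  refine ⟨hconst, ?_⟩
  rw [← Real.sign_mul_of_pos (Real.rpow_pos_of_pos (hpos t (right_mem_Icc.2 ht.1)) d), hconst,
    Real.sign_mul_of_pos (Real.rpow_pos_of_pos hr0 d)]

/-- Along solutions of the characteristic system `Ġ = cF − dFG`, `Ḟ = −F² − m − kG`
with `ṙ = Fr`, `r(0) > 0`, the quantity `(c − dG(t)) r(t)^d` is constant; in particular
the sign of `c − dG(t)` is constant. -/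
theorem conserved_background (c d k m T : ℝ) (hd : d ≠ 0)
    (F G r : ℝ → ℝ)
    (hG : ∀ t ∈ Set.Ico (0:ℝ) T, HasDerivAt G (c * F t - d * F t * G t) t)
    (hF : ∀ t ∈ Set.Ico (0:ℝ) T, HasDerivAt F (-(F t) ^ 2 - m - k * G t) t)
    (hr : ∀ t ∈ Set.Ico (0:ℝ) T, HasDerivAt r (F t * r t) t)
    (hr0 : 0 < r 0) :
    ∀ t ∈ Set.Ico (0:ℝ) T,
      (c - d * G t) * r t ^ d = (c - d * G 0) * r 0 ^ d ∧
      Real.sign (c - d * G t) = Real.sign (c - d * G 0) :=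
  conserved_background_general c d k m T F G r hG hF hr hr0
end

section
/- Let d = 2, μ = 0, and let (F, G) be a C¹ solution of Ġ = cF − 2FG, Ḟ = −F² − m − kG on an interval where 2G − c ≠ 0. Then E(t) := (2F(t)² + kc + 2m)/(2G(t) − c) − k ln|2G(t) − c| is constant in t. -/
/-- First integral for `d = 2`, `μ = 0`: along solutions of `Ġ = cF − 2FG`,
`Ḟ = −F² − m − kG` with `2G − c ≠ 0`, the quantity
`E(t) = (2F(t)² + kc + 2m)/(2G(t) − c) − k ln|2G(t) − c|` is constant. -/
theorem first_integral_dim2 (c k m T : ℝ) (F G : ℝ → ℝ)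
    (hG : ∀ t ∈ Set.Ico (0:ℝ) T, HasDerivAt G (c * F t - 2 * F t * G t) t)
    (hF : ∀ t ∈ Set.Ico (0:ℝ) T, HasDerivAt F (-(F t) ^ 2 - m - k * G t) t)
    (hne : ∀ t ∈ Set.Ico (0:ℝ) T, 2 * G t - c ≠ 0) :
    ∀ t ∈ Set.Ico (0:ℝ) T,
      (2 * (F t) ^ 2 + k * c + 2 * m) / (2 * G t - c) - k * Real.log |2 * G t - c|
        = (2 * (F 0) ^ 2 + k * c + 2 * m) / (2 * G 0 - c) - k * Real.log |2 * G 0 - c| := by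
  set E : ℝ → ℝ := fun s =>
    (2 * (F s) ^ 2 + k * c + 2 * m) / (2 * G s - c) - k * Real.log (2 * G s - c) with hEdef
  have key : ∀ s ∈ Set.Ico (0:ℝ) T, HasDerivAt E 0 s := by
    intro s hs
    have hFs := hF s hs
    have hGs := hG s hs
    have hvs := hne s hs
    have hu : HasDerivAt (fun x => 2 * (F x) ^ 2 + k * c + 2 * m)
        (2 * (2 * F s * (-(F s) ^ 2 - m - k * G s))) s := by
      have h := ((hFs.pow 2).const_mul 2).add_const (k * c + 2 * m)
      have e1 : (fun x => 2 * (F x) ^ 2 + k * c + 2 * m) = fun x => 2 * (F ^ 2) x + (k * c + 2 * m) := by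
        funext x; simp only [Pi.pow_apply]; ring
      rw [e1]
      exact h.congr_deriv (by push_cast; ring)
    have hv : HasDerivAt (fun x => 2 * G x - c) (2 * (c * F s - 2 * F s * G s)) s :=
      (hGs.const_mul 2).sub_const c
    have hdiv := hu.div hv hvs
    have hlog := (hv.log hvs).const_mul k
    have hsum := hdiv.sub hlog
    refine hsum.congr_deriv ?_
    field_simp
    ring
  intro t ht
  obtain ⟨ht0, htT⟩ := ht
  have hsub : Set.Icc (0:ℝ) t ⊆ Set.Ico (0:ℝ) T := fun x hx =>
    ⟨hx.1, lt_of_le_of_lt hx.2 htT⟩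
  have hcont : ContinuousOn E (Set.Icc 0 t) := fun x hx =>
    ((key x (hsub hx)).continuousAt).continuousWithinAt
  have hderiv : ∀ x ∈ Set.Ico (0:ℝ) t, HasDerivWithinAt E 0 (Set.Ici x) x := fun x hx =>
    (key x (hsub ⟨hx.1, hx.2.le⟩)).hasDerivWithinAt
  have hconst := constant_of_has_deriv_right_zero hcont hderiv t ⟨ht0, le_refl t⟩
  simpa only [hEdef, Real.log_abs] using hconst
end

section
/- Let d = 1, k > 0, c > 0, m = 0. A trajectory of the system Ġ = cF − FG, Ḟ = −F² − kG starting at (G₀, F₀) with G₀ < c is periodic (the phase curve is closed in the half-plane G < c) if and only if F₀² < k(c − 2G₀). -/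
open Real Set Function

/-! Along a trajectory, `c - G` and `F² + 2kG - kc` solve `y' = -F y` and `y' = -2F y`, so
their signs never change. The substitution `p = 1 / (c - G)`, `q = F p` turns the system into
the oscillator `p' = q`, `q' = k - kcp`; when `F₀² < k(c - 2G₀)` its amplitude around `1 / c`
is smaller than `1 / c`, so `p` stays positive and yields a periodic trajectory.
Conversely, if `F₀² ≥ k(c - 2G₀)` then `F² + 2kG - kc ≥ 0` forever, so `G ≥ c / 2` and
`F' = -kG < 0` at every zero of `F`, and `F` has at most one zero. On a periodic trajectory
Rolle's theorem applied to `c - G` on `[0, T]` gives a zero `ξ` of `F`, and `ξ + T` is another. -/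

theorem eq_mul_exp_integral_of_hasDerivAt {y g : ℝ → ℝ} (hg : Continuous g)
    (hy : ∀ t, HasDerivAt y (g t * y t) t) (t : ℝ) :
    y t = y 0 * exp (∫ s in (0 : ℝ)..t, g s) := by
  set Φ : ℝ → ℝ := fun t => ∫ s in (0 : ℝ)..t, g s
  have hΦ : ∀ t, HasDerivAt Φ (g t) t := fun t => (hg.integral_hasStrictDerivAt 0 t).hasDerivAt
  have hconst : ∀ s, HasDerivAt (fun r => y r * exp (-Φ r)) 0 s := fun s =>
    ((hy s).mul (hΦ s).neg.exp).congr_deriv (by ring)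
  have h := is_const_of_deriv_eq_zero (fun s => (hconst s).differentiableAt)
    (fun s => (hconst s).deriv) t 0
  simp only [Φ, intervalIntegral.integral_same, neg_zero, exp_zero, mul_one] at h
  rw [← h, mul_assoc, ← exp_add, neg_add_cancel, exp_zero, mul_one]

theorem subsingleton_zeros_of_deriv_neg {f f' : ℝ → ℝ} (hf : ∀ x, HasDerivAt f (f' x) x)
    (hneg : ∀ x, f x = 0 → f' x < 0) : {x | f x = 0}.Subsingleton := by
  suffices h : ∀ a b, f a = 0 → f b = 0 → ¬ a < b by
    intro a ha b hb
    rcases lt_trichotomy a b with hab | hab | hab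
    exacts [absurd hab (h a b ha hb), hab, absurd hab (h b a hb ha)]
  intro a b ha hb hab
  have hnonpos : ∀ x ∈ Icc a (b + 1), f x ≤ 0 :=
    image_le_of_deriv_right_lt_deriv_boundary (fun x _ => (hf x).continuousAt.continuousWithinAt)
      (fun x _ => (hf x).hasDerivWithinAt) ha.le (fun _ => hasDerivAt_const _ 0)
      (fun x _ hx => hneg x hx)
  have hmax : IsLocalMax f b :=
    Filter.mem_of_superset (Icc_mem_nhds hab (lt_add_one b)) fun x hx => hb ▸ hnonpos x hx
  exact (hneg b hb).ne (hmax.hasDerivAt_eq_zero (hf b))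

noncomputable def harmonicOsc (ω A B t : ℝ) : ℝ := A * cos (ω * t) + B * sin (ω * t)

theorem hasDerivAt_harmonicOsc (ω A B t : ℝ) :
    HasDerivAt (harmonicOsc ω A B) (harmonicOsc ω (ω * B) (-(ω * A)) t) t := by
  have hlin : HasDerivAt (fun s => ω * s) ω t := by simpa using (hasDerivAt_id t).const_mul ω
  exact ((hlin.cos.const_mul A).fun_add (hlin.sin.const_mul B)).congr_deriv
    (by simp only [harmonicOsc]; ring)

theorem harmonicOsc_sq_le (ω A B t : ℝ) : harmonicOsc ω A B t ^ 2 ≤ A ^ 2 + B ^ 2 := by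
  unfold harmonicOsc
  nlinarith [sq_nonneg (A * sin (ω * t) - B * cos (ω * t)), sin_sq_add_cos_sq (ω * t)]

theorem harmonicOsc_periodic {ω : ℝ} (hω : ω ≠ 0) (A B : ℝ) :
    Periodic (harmonicOsc ω A B) (2 * π / ω) := by
  intro t
  have harg : ω * (t + 2 * π / ω) = ω * t + 2 * π := by field_simp
  simp only [harmonicOsc, harg, cos_add_two_pi, sin_add_two_pi]

theorem harmonicOsc_zero (ω A B : ℝ) : harmonicOsc ω A B 0 = A := by simp [harmonicOsc]

namespace EulerPoisson

def IsTrajectory (k c : ℝ) (F G : ℝ → ℝ) : Prop :=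
  ∀ t, HasDerivAt G (c * F t - F t * G t) t ∧ HasDerivAt F (-(F t) ^ 2 - k * G t) t

variable {k c : ℝ} {F G : ℝ → ℝ}

theorem isTrajectory_of_oscillator {p q : ℝ → ℝ} (hp : ∀ t, HasDerivAt p (q t) t)
    (hq : ∀ t, HasDerivAt q (k - k * c * p t) t) (hp₀ : ∀ t, p t ≠ 0) :
    IsTrajectory k c (fun t => q t / p t) (fun t => c - (p t)⁻¹) := by
  intro t
  have := hp₀ t
  constructor
  · refine (((hp t).inv (hp₀ t)).const_sub c).congr_deriv ?_
    field_simp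
    ring
  · refine ((hq t).div (hp t) (hp₀ t)).congr_deriv ?_
    field_simp
    ring

theorem exists_periodic_trajectory (hk : 0 < k) (hc : 0 < c) {F₀ G₀ : ℝ} (hG₀ : G₀ < c)
    (h : F₀ ^ 2 < k * (c - 2 * G₀)) :
    ∃ F G : ℝ → ℝ, IsTrajectory k c F G ∧ F 0 = F₀ ∧ G 0 = G₀ ∧
      ∃ T > 0, Periodic F T ∧ Periodic G T := by
  obtain ⟨ω, hω, hω2⟩ : ∃ ω, 0 < ω ∧ ω ^ 2 = k * c :=
    ⟨√(k * c), sqrt_pos.mpr (mul_pos hk hc), sq_sqrt (mul_pos hk hc).le⟩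
  have hc₀ := hc.ne'
  have hu₀ : c - G₀ ≠ 0 := (sub_pos.mpr hG₀).ne'
  have hω₀ := hω.ne'
  -- chosen so that `p 0 = 1 / (c - G₀)` and `q 0 = F₀ p 0`
  obtain ⟨A, hA⟩ : ∃ A, A = 1 / (c - G₀) - 1 / c := ⟨_, rfl⟩
  obtain ⟨B, hB⟩ : ∃ B, B = F₀ / (ω * (c - G₀)) := ⟨_, rfl⟩
  have hAB : A ^ 2 + B ^ 2 < (1 / c) ^ 2 := by
    have : (1 / c) ^ 2 - (A ^ 2 + B ^ 2) =
        (k * (c - 2 * G₀) - F₀ ^ 2) / (k * c * (c - G₀) ^ 2) := by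
      rw [hA, hB]
      field_simp
      rw [hω2]
      ring
    have : 0 < (1 / c) ^ 2 - (A ^ 2 + B ^ 2) := by
      rw [this]
      exact div_pos (by linarith) (by positivity)
    linarith
  set p : ℝ → ℝ := fun t => 1 / c + harmonicOsc ω A B t
  set q : ℝ → ℝ := harmonicOsc ω (ω * B) (-(ω * A))
  have hp : ∀ t, HasDerivAt p (q t) t := fun t => (hasDerivAt_harmonicOsc ω A B t).const_add _
  have hq : ∀ t, HasDerivAt q (k - k * c * p t) t := fun t => by
    convert hasDerivAt_harmonicOsc ω (ω * B) (-(ω * A)) t using 1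
    simp only [p, harmonicOsc]
    field_simp
    linear_combination (A * cos (ω * t) + B * sin (ω * t)) * hω2
  have hp_pos : ∀ t, 0 < p t := fun t => by
    have := (abs_lt_of_sq_lt_sq' ((harmonicOsc_sq_le ω A B t).trans_lt hAB) (by positivity)).1
    simp only [p]
    linarith
  refine ⟨_, _, isTrajectory_of_oscillator hp hq fun t => (hp_pos t).ne', ?_, ?_,
    2 * π / ω, by positivity, fun t => ?_, fun t => ?_⟩
  · simp only [p, q, harmonicOsc_zero, hA, hB, add_sub_cancel]
    field_simp
  · simp only [p, harmonicOsc_zero, hA, add_sub_cancel, one_div, inv_inv]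
    ring
  · simp only [p, q, harmonicOsc_periodic hω₀ _ _ t]
  · simp only [p, harmonicOsc_periodic hω₀ _ _ t]

theorem IsTrajectory.continuous_F (h : IsTrajectory k c F G) : Continuous F :=
  continuous_iff_continuousAt.mpr fun t => (h t).2.continuousAt

theorem IsTrajectory.sub_eq_mul_exp (h : IsTrajectory k c F G) (t : ℝ) :
    c - G t = (c - G 0) * exp (∫ s in (0 : ℝ)..t, -F s) :=
  eq_mul_exp_integral_of_hasDerivAt (y := fun t => c - G t) (g := fun s => -F s)
    h.continuous_F.neg (fun t => ((h t).1.const_sub c).congr_deriv (by ring)) t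

/-- `F² + 2kG - kc` vanishes exactly on the critical curve `F² = k(c - 2G)`. -/
theorem IsTrajectory.energy_eq_mul_exp (h : IsTrajectory k c F G) (t : ℝ) :
    F t ^ 2 + 2 * k * G t - k * c =
      (F 0 ^ 2 + 2 * k * G 0 - k * c) * exp (∫ s in (0 : ℝ)..t, -2 * F s) :=
  eq_mul_exp_integral_of_hasDerivAt (y := fun t => F t ^ 2 + 2 * k * G t - k * c)
    (g := fun s => -2 * F s) (continuous_const.mul h.continuous_F)
    (fun t => ((((h t).2.pow 2).add ((h t).1.const_mul (2 * k))).sub_const (k * c)).congr_deriv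
      (by ring)) t

theorem IsTrajectory.sq_lt_of_periodic (h : IsTrajectory k c F G) (hk : 0 < k) (hc : 0 < c)
    (hG₀ : G 0 < c) {T : ℝ} (hT : 0 < T) (hF : Periodic F T) (hG : Periodic G T) :
    F 0 ^ 2 < k * (c - 2 * G 0) := by
  by_contra! hcrit
  have hzeros : {t | F t = 0}.Subsingleton := by
    refine subsingleton_zeros_of_deriv_neg (fun t => (h t).2) fun t ht => ?_
    have henergy : 0 ≤ F t ^ 2 + 2 * k * G t - k * c := by
      rw [h.energy_eq_mul_exp t]
      exact mul_nonneg (by linarith) (exp_pos _).le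
    rw [ht] at henergy ⊢
    nlinarith
  have hu_pos : ∀ t, 0 < c - G t := fun t => by
    rw [h.sub_eq_mul_exp t]
    exact mul_pos (by linarith) (exp_pos _)
  obtain ⟨ξ, -, hξ⟩ := exists_hasDerivAt_eq_zero hT
    (fun t _ => ((h t).1.const_sub c).continuousAt.continuousWithinAt)
    (by simpa using congrArg (c - ·) (hG 0).symm)
    (fun t _ => (h t).1.const_sub c)
  have hFξ : F ξ = 0 := by
    have : -(F ξ * (c - G ξ)) = 0 := by rw [← hξ]; ring
    simpa [(hu_pos ξ).ne'] using this
  have := hzeros hFξ (show F (ξ + T) = 0 from (hF ξ).trans hFξ)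
  linarith

end EulerPoisson

/-- `d = 1`, `k > 0`, `c > 0`, `m = 0`: the trajectory of `Ġ = cF − FG`, `Ḟ = −F² − kG`
through `(G₀, F₀)` with `G₀ < c` is periodic (closed phase curve in `G < c`) iff
`F₀² < k(c − 2G₀)`. -/
theorem periodic_criterion_dim1 (k c F₀ G₀ : ℝ) (hk : 0 < k) (hc : 0 < c)
    (hG₀ : G₀ < c) :
    (∃ F G : ℝ → ℝ,
      (∀ t : ℝ, HasDerivAt G (c * F t - F t * G t) t ∧
                HasDerivAt F (-(F t) ^ 2 - k * G t) t) ∧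
      F 0 = F₀ ∧ G 0 = G₀ ∧
      ∃ T > 0, ∀ t : ℝ, F (t + T) = F t ∧ G (t + T) = G t)
    ↔ F₀ ^ 2 < k * (c - 2 * G₀) := by
  constructor
  · rintro ⟨F, G, hFG, rfl, rfl, T, hT, hper⟩
    exact EulerPoisson.IsTrajectory.sq_lt_of_periodic hFG hk hc hG₀ hT (fun t => (hper t).1)
      fun t => (hper t).2
  · intro h
    obtain ⟨F, G, hFG, hF₀, hG₀', T, hT, hF, hG⟩ :=
      EulerPoisson.exists_periodic_trajectory hk hc hG₀ h
    exact ⟨F, G, hFG, hF₀, hG₀', T, hT, fun t => ⟨hF t, hG t⟩⟩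
end
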